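/- arXiv:1010.6055 — 7 statements merged into one kernel-verified Lean document; each statement's English description precedes it below -/
import Mathlib

section
/- Fix m ∈ ℤ and n ∈ ℕ with n ≥ 1 and gcd(m,n) = 1, ℓ ∈ ℕ, and a polynomial p ∈ ℂ[x], and define H : (ℂ ∖ {0}) × ℂ → ℂ × ℂ by H(u,v) = (u^n, u^{−(m+nℓ)}·(v − u^m·p(u^n))). Then: (i) for all u, u₀ ∈ ℂ ∖ {0} and v, v₀ ∈ ℂ, H(u,v) = H(u₀,v₀) if and only if there exists ζ ∈ ℂ with ζ^n = 1 such that u = ζ·u₀ and v = ζ^m·v₀; consequently every fiber of H has exactly n elements; (ii) H maps (ℂ ∖ {0}) × ℂ onto {(x,y) ∈ ℂ × ℂ : x ≠ 0}. -/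
open Complex

private lemma zeta_ne_zero' {ζ : ℂ} {n : ℕ} (hn : 1 ≤ n) (hζ : ζ ^ n = 1) : ζ ≠ 0 := by
  intro h
  rw [h, zero_pow (by omega)] at hζ
  exact one_ne_zero hζ.symm

private lemma key' (m : ℤ) (n ℓ : ℕ) (hn : 1 ≤ n) {ζ u₀ : ℂ} (hu₀ : u₀ ≠ 0)
    (hζ : ζ ^ n = 1) (c v v₀ : ℂ) :
    (ζ * u₀) ^ (-(m + (n : ℤ) * (ℓ : ℤ))) * (v - (ζ * u₀) ^ m * c)
      = u₀ ^ (-(m + (n : ℤ) * (ℓ : ℤ))) * (v₀ - u₀ ^ m * c) ↔ v = ζ ^ m * v₀ := by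
  have hζ0 : ζ ≠ 0 := zeta_ne_zero' hn hζ
  have hζn : ζ ^ ((n : ℤ) * (ℓ : ℤ)) = 1 := by
    rw [zpow_mul]; simp [hζ]
  have h1 : (ζ * u₀) ^ (-(m + (n : ℤ) * (ℓ : ℤ)))
      = (ζ ^ m)⁻¹ * u₀ ^ (-(m + (n : ℤ) * (ℓ : ℤ))) := by
    rw [mul_zpow, zpow_neg ζ, zpow_add₀ hζ0, hζn, mul_one, ← zpow_neg]
  have hA : u₀ ^ (-(m + (n : ℤ) * (ℓ : ℤ))) ≠ 0 := zpow_ne_zero _ hu₀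
  have hB : ζ ^ m ≠ 0 := zpow_ne_zero _ hζ0
  rw [h1, mul_zpow]
  constructor
  · intro h
    have h2 := congrArg (fun x => ζ ^ m * x) h
    rw [← mul_assoc, ← mul_assoc, mul_inv_cancel₀ hB, one_mul] at h2
    have h3 : u₀ ^ (-(m + (n : ℤ) * (ℓ : ℤ))) * (v - ζ ^ m * u₀ ^ m * c)
        = u₀ ^ (-(m + (n : ℤ) * (ℓ : ℤ))) * (ζ ^ m * v₀ - ζ ^ m * u₀ ^ m * c) := by
      rw [h2]; ring
    have h4 := mul_left_cancel₀ hA h3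
    linear_combination h4
  · rintro rfl
    field_simp

/-- The map `H(u,v) = (u^n, u^{-(m+nℓ)}(v - u^m p(u^n)))` identifies
points exactly up to the `ℤ/n` action `(u,v) ↦ (ζu, ζ^m v)` with `ζ^n = 1`; its
fibers have exactly `n` elements, and it maps `(ℂ∖{0}) × ℂ` onto `{x ≠ 0}`. -/
theorem H_covering_properties
    (m : ℤ) (n ℓ : ℕ) (hn : 1 ≤ n) (hgcd : Int.gcd m n = 1) (p : Polynomial ℂ)
    (H : ℂ → ℂ → ℂ × ℂ)
    (hH : ∀ u v : ℂ,
      H u v = ((u ^ n : ℂ), u ^ (-(m + (n : ℤ) * (ℓ : ℤ))) * (v - u ^ m * p.eval (u ^ n)))) :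
    (∀ u u₀ : ℂ, u ≠ 0 → u₀ ≠ 0 → ∀ v v₀ : ℂ,
        (H u v = H u₀ v₀ ↔ ∃ ζ : ℂ, ζ ^ n = 1 ∧ u = ζ * u₀ ∧ v = ζ ^ m * v₀)) ∧
    (∀ u₀ : ℂ, u₀ ≠ 0 → ∀ v₀ : ℂ,
        {w : ℂ × ℂ | w.1 ≠ 0 ∧ H w.1 w.2 = H u₀ v₀}.ncard = n) ∧
    (∀ z : ℂ × ℂ, z.1 ≠ 0 → ∃ u v : ℂ, u ≠ 0 ∧ H u v = z) := by
  have part1 : ∀ u u₀ : ℂ, u ≠ 0 → u₀ ≠ 0 → ∀ v v₀ : ℂ,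
      (H u v = H u₀ v₀ ↔ ∃ ζ : ℂ, ζ ^ n = 1 ∧ u = ζ * u₀ ∧ v = ζ ^ m * v₀) := by
    intro u u₀ hu hu₀ v v₀
    rw [hH, hH, Prod.ext_iff]
    simp only
    constructor
    · rintro ⟨h1, h2⟩
      have hζ : (u / u₀) ^ n = 1 := by
        rw [div_pow, h1, div_self (pow_ne_zero _ hu₀)]
      have hu' : u = (u / u₀) * u₀ := by field_simp
      refine ⟨u / u₀, hζ, hu', ?_⟩
      rw [h1] at h2
      rw [hu'] at h2
      exact (key' m n ℓ hn hu₀ hζ _ v v₀).mp h2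
    · rintro ⟨ζ, hζ, rfl, rfl⟩
      have h1 : (ζ * u₀) ^ n = u₀ ^ n := by rw [mul_pow, hζ, one_mul]
      refine ⟨h1, ?_⟩
      rw [h1]
      exact (key' m n ℓ hn hu₀ hζ _ _ v₀).mpr rfl
  refine ⟨part1, ?_, ?_⟩
  · intro u₀ hu₀ v₀
    have hset : {w : ℂ × ℂ | w.1 ≠ 0 ∧ H w.1 w.2 = H u₀ v₀}
        = (fun ζ : ℂ => (ζ * u₀, ζ ^ m * v₀)) '' {ζ : ℂ | ζ ^ n = 1} := by
      ext ⟨a, b⟩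
      simp only [Set.mem_setOf_eq, Set.mem_image, Prod.mk.injEq]
      constructor
      · rintro ⟨ha, hHa⟩
        obtain ⟨ζ, hζ, h1, h2⟩ := (part1 a u₀ ha hu₀ b v₀).mp hHa
        exact ⟨ζ, hζ, h1.symm, h2.symm⟩
      · rintro ⟨ζ, hζ, h1, h2⟩
        have hζ0 : ζ ≠ 0 := zeta_ne_zero' hn hζ
        have ha : a ≠ 0 := by rw [← h1]; exact mul_ne_zero hζ0 hu₀
        exact ⟨ha, (part1 a u₀ ha hu₀ b v₀).mpr ⟨ζ, hζ, h1.symm, h2.symm⟩⟩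
    rw [hset]
    rw [Set.ncard_image_of_injOn (by
      intro x hx y hy hxy
      have := congrArg Prod.fst hxy
      simpa [hu₀] using mul_right_cancel₀ hu₀ this)]
    have hroots : {ζ : ℂ | ζ ^ n = 1} = ↑(Polynomial.nthRootsFinset n (1 : ℂ)) := by
      ext ζ
      simp [Polynomial.mem_nthRootsFinset (by omega : 0 < n) (1 : ℂ)]
    rw [hroots, Set.ncard_coe_finset,
      (Complex.isPrimitiveRoot_exp n (by omega)).card_nthRootsFinset]
  · intro z hz
    obtain ⟨u, hu⟩ := IsAlgClosed.exists_pow_nat_eq z.1 (hn := by omega) (n := n)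
    have hu0 : u ≠ 0 := by
      intro h; rw [h, zero_pow (by omega)] at hu; exact hz hu.symm
    refine ⟨u, u ^ m * p.eval z.1 + u ^ (m + (n : ℤ) * (ℓ : ℤ)) * z.2, hu0, ?_⟩
    rw [hH, hu]
    refine Prod.ext rfl ?_
    simp only
    rw [add_sub_cancel_left, ← mul_assoc, ← zpow_add₀ hu0, neg_add_cancel, zpow_zero, one_mul]
end

section
/- Fix m, n ∈ ℕ with m ≥ 1, n ≥ 1 and gcd(m,n) = 1, ℓ ∈ ℕ, and a polynomial p ∈ ℂ[x]. Let a ∈ ℂ with a ≠ 0 and let α ∈ ℂ with α^n = a. Then the holomorphic map φ : ℂ ∖ {0} → ℂ × ℂ defined by φ(u) = (u^n, u^{−(m+nℓ)}·(α − u^m·p(u^n))) is a bijection from ℂ ∖ {0} onto the fiber {(x,y) ∈ ℂ × ℂ : x^m·(x^ℓ·y + p(x))^n = a}. (In particular every fiber of P(x,y) = x^m·(x^ℓ·y + p(x))^n over a nonzero value is of type ℂ*.) -/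
open Complex

/-- For `a ≠ 0` with `α^n = a`, the holomorphic map
`φ(u) = (u^n, u^{-(m+nℓ)}(α - u^m p(u^n)))` is a bijection from `ℂ∖{0}` onto the
fiber `{x^m (x^ℓ y + p(x))^n = a}` of `P`; in particular this fiber is of type `ℂ*`. -/
theorem fiber_over_nonzero_value_is_Cstar
    (m n ℓ : ℕ) (hm : 1 ≤ m) (hn : 1 ≤ n) (hgcd : Nat.gcd m n = 1)
    (p : Polynomial ℂ) (a α : ℂ) (ha : a ≠ 0) (hα : α ^ n = a) :
    DifferentiableOn ℂ
      (fun u : ℂ =>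
        (((u ^ n : ℂ), u ^ (-((m : ℤ) + (n : ℤ) * (ℓ : ℤ))) * (α - u ^ m * p.eval (u ^ n)))
          : ℂ × ℂ)) {(0 : ℂ)}ᶜ ∧
    Set.BijOn
      (fun u : ℂ =>
        (((u ^ n : ℂ), u ^ (-((m : ℤ) + (n : ℤ) * (ℓ : ℤ))) * (α - u ^ m * p.eval (u ^ n)))
          : ℂ × ℂ))
      {(0 : ℂ)}ᶜ
      {z : ℂ × ℂ | z.1 ^ m * (z.1 ^ ℓ * z.2 + p.eval z.1) ^ n = a} := by
  have hα0 : α ≠ 0 := by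
    intro h
    apply ha
    rw [← hα, h, zero_pow (by omega : n ≠ 0)]
  set φ : ℂ → ℂ × ℂ := fun u : ℂ =>
      (((u ^ n : ℂ), u ^ (-((m : ℤ) + (n : ℤ) * (ℓ : ℤ))) * (α - u ^ m * p.eval (u ^ n)))
        : ℂ × ℂ) with hφdef
  -- rewrite the negative zpow as an inverse of a natural power
  have ezpow : ∀ u : ℂ, u ^ (-((m : ℤ) + (n : ℤ) * (ℓ : ℤ))) = (u ^ (m + n * ℓ))⁻¹ := by
    intro u
    rw [← zpow_natCast u (m + n * ℓ), ← zpow_neg]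
    norm_num
  constructor
  · -- differentiability
    intro u hu
    have hu' : u ≠ 0 := hu
    apply DifferentiableAt.differentiableWithinAt
    apply DifferentiableAt.prodMk
    · exact differentiableAt_id.pow n
    · refine DifferentiableAt.mul ?_ ?_
      · exact differentiableAt_zpow.2 (Or.inl hu')
      · refine (differentiableAt_const α).sub ?_
        refine (differentiableAt_id.pow m).mul ?_
        exact (p.differentiableAt).comp u (differentiableAt_id.pow n)
  · -- bijectivity
    obtain ⟨c, d, hcd⟩ : ∃ c d : ℤ, (m : ℤ) * c + (n : ℤ) * d = 1 := by
      refine ⟨Nat.gcdA m n, Nat.gcdB m n, ?_⟩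
      have := Nat.gcd_eq_gcd_ab m n
      rw [hgcd] at this
      push_cast at this ⊢
      linarith
    set ψ : ℂ × ℂ → ℂ := fun z =>
      z.1 ^ d * (α / (z.1 ^ ℓ * z.2 + p.eval z.1)) ^ c with hψdef
    -- key identity for u ≠ 0
    have key : ∀ u : ℂ, u ≠ 0 →
        (u ^ n) ^ ℓ * (u ^ (-((m : ℤ) + (n : ℤ) * (ℓ : ℤ))) * (α - u ^ m * p.eval (u ^ n)))
          + p.eval (u ^ n) = α / u ^ m := by
      intro u hu
      rw [ezpow]
      have h1 : u ^ (m + n * ℓ) ≠ 0 := pow_ne_zero _ hu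
      have h2 : u ^ m ≠ 0 := pow_ne_zero _ hu
      field_simp
      ring
    have hmapsφ : Set.MapsTo φ {(0 : ℂ)}ᶜ
        {z : ℂ × ℂ | z.1 ^ m * (z.1 ^ ℓ * z.2 + p.eval z.1) ^ n = a} := by
      intro u hu
      have hu' : u ≠ 0 := hu
      show ((u ^ n) ^ m) * ((u ^ n) ^ ℓ * (u ^ (-((m : ℤ) + (n : ℤ) * (ℓ : ℤ))) *
        (α - u ^ m * p.eval (u ^ n))) + p.eval (u ^ n)) ^ n = a
      rw [key u hu', div_pow, ← hα]
      have h2 : (u ^ m) ^ n ≠ 0 := pow_ne_zero _ (pow_ne_zero _ hu')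
      field_simp
      ring
    have hmapsψ : Set.MapsTo ψ
        {z : ℂ × ℂ | z.1 ^ m * (z.1 ^ ℓ * z.2 + p.eval z.1) ^ n = a} {(0 : ℂ)}ᶜ := by
      rintro ⟨x, y⟩ hz
      have hz' : x ^ m * (x ^ ℓ * y + p.eval x) ^ n = a := hz
      have hx : x ≠ 0 := by
        intro h
        rw [h, zero_pow (by omega : m ≠ 0), zero_mul] at hz'
        exact ha hz'.symm
      have ht : x ^ ℓ * y + p.eval x ≠ 0 := by
        intro h
        rw [h, zero_pow (by omega : n ≠ 0), mul_zero] at hz'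
        exact ha hz'.symm
      have : ψ (x, y) ≠ 0 := by
        simp only [hψdef]
        exact mul_ne_zero (zpow_ne_zero _ hx) (zpow_ne_zero _ (div_ne_zero hα0 ht))
      exact this
    -- main facts about ψ on the fiber
    have hinv : Set.InvOn ψ φ {(0 : ℂ)}ᶜ
        {z : ℂ × ℂ | z.1 ^ m * (z.1 ^ ℓ * z.2 + p.eval z.1) ^ n = a} := by
      constructor
      · -- left inverse: ψ (φ u) = u
        intro u hu
        have hu' : u ≠ 0 := hu
        show (u ^ n) ^ d * (α / ((u ^ n) ^ ℓ * (u ^ (-((m : ℤ) + (n : ℤ) * (ℓ : ℤ))) *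
          (α - u ^ m * p.eval (u ^ n))) + p.eval (u ^ n))) ^ c = u
        rw [key u hu']
        have : α / (α / u ^ m) = u ^ m := by
          rw [div_div_eq_mul_div, mul_comm, mul_div_assoc, div_self hα0, mul_one]
        rw [this]
        rw [← zpow_natCast u n, ← zpow_natCast u m, ← zpow_mul, ← zpow_mul,
          ← zpow_add₀ hu', ← zpow_one u]
        congr 1
        rw [zpow_one]
        push_cast
        linarith [hcd]
      · -- right inverse: φ (ψ z) = z
        rintro ⟨x, y⟩ hz
        have hz' : x ^ m * (x ^ ℓ * y + p.eval x) ^ n = a := hz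
        have hx : x ≠ 0 := by
          intro h
          rw [h, zero_pow (by omega : m ≠ 0), zero_mul] at hz'
          exact ha hz'.symm
        set t : ℂ := x ^ ℓ * y + p.eval x with htdef
        have ht : t ≠ 0 := by
          intro h
          rw [h, zero_pow (by omega : n ≠ 0), mul_zero] at hz'
          exact ha hz'.symm
        have hq : α / t ≠ 0 := div_ne_zero hα0 ht
        set u : ℂ := x ^ d * (α / t) ^ c with hudef
        have hu : u ≠ 0 := mul_ne_zero (zpow_ne_zero _ hx) (zpow_ne_zero _ hq)
        -- (α/t)^n = x^m
        have hqn : (α / t) ^ (n : ℤ) = x ^ (m : ℤ) := by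
          rw [zpow_natCast, zpow_natCast, div_pow, hα]
          rw [eq_comm, eq_div_iff (pow_ne_zero _ ht)]
          exact hz'
        have hun : u ^ n = x := by
          have : u ^ (n : ℤ) = x := by
            rw [hudef, mul_zpow, ← zpow_mul, ← zpow_mul,
              show d * (n : ℤ) = (n : ℤ) * d from mul_comm _ _,
              show c * (n : ℤ) = (n : ℤ) * c from mul_comm _ _,
              zpow_mul (α / t) (n : ℤ) c, hqn, ← zpow_mul, ← zpow_add₀ hx]
            rw [show (n : ℤ) * d + (m : ℤ) * c = 1 by linarith [hcd], zpow_one]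
          rwa [zpow_natCast] at this
        have hum : u ^ m = α / t := by
          have : u ^ (m : ℤ) = α / t := by
            rw [hudef, mul_zpow, ← zpow_mul, ← zpow_mul,
              show d * (m : ℤ) = (m : ℤ) * d from mul_comm _ _,
              zpow_mul x (m : ℤ) d, ← hqn, ← zpow_mul, ← zpow_add₀ hq]
            rw [show (n : ℤ) * d + c * (m : ℤ) = 1 by linarith [hcd], zpow_one]
          rwa [zpow_natCast] at this
        -- now compute φ u
        show ((u ^ n : ℂ), u ^ (-((m : ℤ) + (n : ℤ) * (ℓ : ℤ))) *
          (α - u ^ m * p.eval (u ^ n))) = (x, y)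
        refine Prod.ext hun ?_
        show u ^ (-((m : ℤ) + (n : ℤ) * (ℓ : ℤ))) * (α - u ^ m * p.eval (u ^ n)) = y
        rw [ezpow, hun, hum]
        have hup : u ^ (m + n * ℓ) = (α / t) * x ^ ℓ := by
          rw [pow_add, hum, pow_mul, hun]
        rw [hup]
        have hxl : x ^ ℓ ≠ 0 := pow_ne_zero _ hx
        rw [htdef]
        have ht' : x ^ ℓ * y + p.eval x ≠ 0 := ht
        field_simp
        ring
    exact hinv.bijOn hmapsφ hmapsψ
end

section
/- Let r, s be positive integers with gcd(r,s) = 1, let a ∈ ℂ with a ≠ 0, and let α ∈ ℂ with α^r = a. Then the map t ↦ (t^r, α·t^s) is a bijection from ℂ onto the algebraic curve {(x,y) ∈ ℂ × ℂ : y^r = a·x^s}. -/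
open Complex

lemma aux_pow_cancel (r s : ℕ) (hr0 : r ≠ 0) (m n : ℤ)
    (hmn : (r : ℤ) * m + (s : ℤ) * n = 1)
    (x y : ℂ) (hy : y ≠ 0) (h1 : x ^ r = y ^ r) (h2 : x ^ s = y ^ s) : x = y := by
  have hx : x ≠ 0 := by
    intro h
    exact pow_ne_zero r hy (by rw [← h1, h, zero_pow hr0])
  calc x = x ^ (1 : ℤ) := (zpow_one x).symm
    _ = x ^ ((r : ℤ) * m + (s : ℤ) * n) := by rw [hmn]
    _ = (x ^ r) ^ m * (x ^ s) ^ n := by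
        rw [zpow_add₀ hx, zpow_mul, zpow_mul, zpow_natCast, zpow_natCast]
    _ = (y ^ r) ^ m * (y ^ s) ^ n := by rw [h1, h2]
    _ = y ^ ((r : ℤ) * m + (s : ℤ) * n) := by
        rw [zpow_add₀ hy, zpow_mul, zpow_mul, zpow_natCast, zpow_natCast]
    _ = y := by rw [hmn, zpow_one]

/-- For coprime positive `r, s`, `a ≠ 0` and `α^r = a`, the map
`t ↦ (t^r, α t^s)` is a bijection from `ℂ` onto the curve `{y^r = a x^s}`. -/
theorem parametrization_of_quasihomogeneous_curve
    (r s : ℕ) (hr : 1 ≤ r) (hs : 1 ≤ s) (hgcd : Nat.gcd r s = 1)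
    (a α : ℂ) (ha : a ≠ 0) (hα : α ^ r = a) :
    Set.BijOn (fun t : ℂ => ((t ^ r, α * t ^ s) : ℂ × ℂ)) Set.univ
      {z : ℂ × ℂ | z.2 ^ r = a * z.1 ^ s} := by
  have hr0 : r ≠ 0 := by omega
  have hs0 : s ≠ 0 := by omega
  have hα0 : α ≠ 0 := by
    intro h
    exact ha (by rw [← hα, h, zero_pow hr0])
  obtain ⟨m, n, hmn⟩ : ∃ m n : ℤ, (r : ℤ) * m + (s : ℤ) * n = 1 := by
    refine ⟨Nat.gcdA r s, Nat.gcdB r s, ?_⟩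
    have h := Nat.gcd_eq_gcd_ab r s
    rw [hgcd] at h
    exact_mod_cast h.symm
  refine ⟨?_, ?_, ?_⟩
  · intro t _
    simp only [Set.mem_setOf_eq]
    rw [mul_pow, hα, ← pow_mul, ← pow_mul, mul_comm s r]
  · intro t _ u _ h
    have h1 : t ^ r = u ^ r := congrArg Prod.fst h
    have h2 : α * t ^ s = α * u ^ s := congrArg Prod.snd h
    have h2' : t ^ s = u ^ s := mul_left_cancel₀ hα0 h2
    rcases eq_or_ne u 0 with hu | hu
    · subst hu
      rw [zero_pow hr0] at h1
      exact pow_eq_zero_iff hr0 |>.mp h1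
    · exact aux_pow_cancel r s hr0 m n hmn t u hu h1 h2'
  · intro z hz
    obtain ⟨x, y⟩ := z
    simp only [Set.mem_setOf_eq] at hz
    rcases eq_or_ne x 0 with hx | hx
    · refine ⟨0, Set.mem_univ 0, ?_⟩
      have hy : y = 0 := by
        have h0 : y ^ r = 0 := by rw [hz, hx, zero_pow hs0, mul_zero]
        exact pow_eq_zero_iff hr0 |>.mp h0
      simp [hx, hy, zero_pow hr0, zero_pow hs0, hr0, hs0]
    · obtain ⟨β, hβ⟩ : ∃ β : ℂ, β ^ r = x :=
        ⟨x ^ ((r : ℂ)⁻¹), Complex.cpow_nat_inv_pow x hr0⟩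
      have hβ0 : β ≠ 0 := fun h => hx (by rw [← hβ, h, zero_pow hr0])
      have hden : α * β ^ s ≠ 0 := mul_ne_zero hα0 (pow_ne_zero _ hβ0)
      set ζ : ℂ := y / (α * β ^ s) with hζdef
      have hdenpow : (α * β ^ s) ^ r = a * x ^ s := by
        rw [mul_pow, hα, ← pow_mul, mul_comm s r, pow_mul, hβ]
      have hax : a * x ^ s ≠ 0 := mul_ne_zero ha (pow_ne_zero _ hx)
      have hζr : ζ ^ r = 1 := by
        rw [hζdef, div_pow, hdenpow, ← hz, div_self (hz ▸ hax)]
      have hζ0 : ζ ≠ 0 := by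
        intro h
        rw [h, zero_pow hr0] at hζr
        exact one_ne_zero hζr.symm
      set ω : ℂ := ζ ^ n with hωdef
      have hωr : ω ^ r = 1 := by
        rw [hωdef, ← zpow_natCast (ζ ^ n) r, ← zpow_mul, mul_comm, zpow_mul,
          zpow_natCast, hζr, one_zpow]
      have hωs : ω ^ s = ζ := by
        rw [hωdef, ← zpow_natCast (ζ ^ n) s, ← zpow_mul, mul_comm]
        have hsn : (s : ℤ) * n = 1 - (r : ℤ) * m := by linarith
        rw [hsn, zpow_sub₀ hζ0, zpow_one, zpow_mul, zpow_natCast, hζr, one_zpow, div_one]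
      refine ⟨ω * β, Set.mem_univ _, ?_⟩
      have hfst : (ω * β) ^ r = x := by rw [mul_pow, hωr, one_mul, hβ]
      have hsnd : α * (ω * β) ^ s = y := by
        rw [mul_pow, hωs, ← mul_assoc, mul_comm α ζ, mul_assoc, hζdef,
          div_mul_cancel₀ _ hden]
      simp [hfst, hsnd]
end

section
/- Fix m ∈ ℤ, n ∈ ℕ with n ≥ 1, ℓ ∈ ℕ, and a polynomial p ∈ ℂ[x], and let P(x,y) = x^m·(x^ℓ·y + p(x))^n (integer power x^m, defined for x ≠ 0). Then the polynomial vector field Y(x,y) = (n·x^{ℓ+1}, −((m + nℓ)·x^ℓ·y + m·p(x) + n·x·p'(x))) is tangent to the level sets of P: for every (x,y) ∈ ℂ × ℂ with x ≠ 0, n·x^{ℓ+1} · ∂P/∂x (x,y) − ((m + nℓ)·x^ℓ·y + m·p(x) + n·x·p'(x)) · ∂P/∂y (x,y) = 0, where ∂P/∂x and ∂P/∂y denote the complex partial derivatives of P in the first and second variable. -/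
open Complex

/-- The vector field
`Y(x,y) = (n x^{ℓ+1}, −((m+nℓ) x^ℓ y + m p(x) + n x p'(x)))` is tangent to the
level sets of `P(x,y) = x^m (x^ℓ y + p(x))^n` on `{x ≠ 0}`. -/
theorem model_field_tangent_to_levels
    (m : ℤ) (n ℓ : ℕ) (hn : 1 ≤ n) (p : Polynomial ℂ)
    (x y : ℂ) (hx : x ≠ 0) :
    (n : ℂ) * x ^ (ℓ + 1) *
        deriv (fun x' : ℂ => x' ^ m * (x' ^ ℓ * y + p.eval x') ^ n) x
      - (((m : ℂ) + (n : ℂ) * (ℓ : ℂ)) * x ^ ℓ * y + (m : ℂ) * p.eval x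
          + (n : ℂ) * x * p.derivative.eval x) *
        deriv (fun y' : ℂ => x ^ m * (x ^ ℓ * y' + p.eval x) ^ n) y = 0 := by
  have hu : HasDerivAt (fun x' : ℂ => x' ^ ℓ * y + p.eval x')
      ((ℓ : ℂ) * x ^ (ℓ - 1) * y + p.derivative.eval x) x :=
    ((hasDerivAt_pow ℓ x).mul_const y).add (p.hasDerivAt x)
  have h1 : HasDerivAt (fun x' : ℂ => x' ^ m * (x' ^ ℓ * y + p.eval x') ^ n)
      ((m : ℂ) * x ^ (m - 1) * (x ^ ℓ * y + p.eval x) ^ n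
        + x ^ m * ((n : ℂ) * (x ^ ℓ * y + p.eval x) ^ (n - 1)
            * ((ℓ : ℂ) * x ^ (ℓ - 1) * y + p.derivative.eval x))) x :=
    (hasDerivAt_zpow m x (Or.inl hx)).mul (hu.pow n)
  have h2 : HasDerivAt (fun y' : ℂ => x ^ m * (x ^ ℓ * y' + p.eval x) ^ n)
      (x ^ m * ((n : ℂ) * (x ^ ℓ * y + p.eval x) ^ (n - 1) * (x ^ ℓ * 1))) y := by
    simpa using
      ((((hasDerivAt_id y).const_mul (x ^ ℓ)).add_const (p.eval x)).pow n).const_mul (x ^ m)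
  rw [h1.deriv, h2.deriv]
  obtain ⟨k, rfl⟩ : ∃ k, n = k + 1 := ⟨n - 1, (Nat.succ_pred_eq_of_pos hn).symm⟩
  have hm : x ^ (m - 1) = x ^ m * x⁻¹ := by
    rw [zpow_sub_one₀ hx]
  rcases ℓ with _ | j
  · simp only [Nat.cast_zero, pow_zero, Nat.add_sub_cancel, hm, pow_succ]
    push_cast
    field_simp
    ring
  · simp only [Nat.add_sub_cancel, Nat.succ_sub_one, hm, pow_succ]
    push_cast
    field_simp
    ring
end

section
/- Let n ∈ ℕ with n ≥ 1, m ∈ ℤ with gcd(m,n) = 1, k ∈ ℤ, ℓ ∈ ℕ, p ∈ ℂ[x] a polynomial, and a ∈ ℂ[z] a polynomial with a(0) ≠ 0. Suppose there exists a function F : ℂ × ℂ → ℂ such that for all u ∈ ℂ ∖ {0} and all v ∈ ℂ, F(u^n, u^{−(m+nℓ)}·(v − u^m·p(u^n))) = u^{k+n}·a(v). Then n divides k, and there exists a polynomial â ∈ ℂ[z] with a(z) = â(z^n) for all z ∈ ℂ. -/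
open Complex

/-- If `u^{k+n} a(v)` is a well-defined function of
`H(u,v) = (u^n, u^{-(m+nℓ)}(v - u^m p(u^n)))`, then `n ∣ k` and `a ∈ ℂ[z^n]`. -/
theorem divisibility_from_descent
    (n : ℕ) (hn : 1 ≤ n) (m : ℤ) (hgcd : Int.gcd m n = 1)
    (k : ℤ) (ℓ : ℕ) (p a : Polynomial ℂ) (ha0 : a.eval 0 ≠ 0)
    (F : ℂ × ℂ → ℂ)
    (hF : ∀ u : ℂ, u ≠ 0 → ∀ v : ℂ,
      F ((u ^ n : ℂ), u ^ (-(m + (n : ℤ) * (ℓ : ℤ))) * (v - u ^ m * p.eval (u ^ n)))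
        = u ^ (k + (n : ℤ)) * a.eval v) :
    (n : ℤ) ∣ k ∧ ∃ ahat : Polynomial ℂ, ∀ z : ℂ, a.eval z = ahat.eval (z ^ n) := by
  classical
  open Polynomial in
  -- Key symmetry: for every n-th root of unity ζ, `ζ^k a(ζ^m v) = a(v)`.
  have key : ∀ ζ : ℂ, ζ ^ n = 1 → ∀ v : ℂ, ζ ^ k * a.eval (ζ ^ m * v) = a.eval v := by
    intro ζ hζ v
    have hζ0 : ζ ≠ 0 := fun h => by simp [h, zero_pow (by omega : n ≠ 0)] at hζ
    have h1 := hF 1 one_ne_zero v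
    simp only [one_pow, one_zpow, one_mul] at h1
    have h2 := hF ζ hζ0 (ζ ^ m * v)
    rw [hζ] at h2
    have hnl : ζ ^ ((n : ℤ) * (ℓ : ℤ)) = 1 := by
      rw [zpow_mul, zpow_natCast, zpow_natCast, hζ, one_pow]
    have harg : ζ ^ (-(m + (n : ℤ) * (ℓ : ℤ))) * (ζ ^ m * v - ζ ^ m * p.eval 1)
        = v - p.eval 1 := by
      rw [← mul_sub, ← mul_assoc, ← zpow_add₀ hζ0]
      have h4 : ζ ^ (-(m + (n : ℤ) * (ℓ : ℤ)) + m) = 1 := by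
        have h5 : (-(m + (n : ℤ) * (ℓ : ℤ)) + m) = -((n : ℤ) * (ℓ : ℤ)) := by ring
        rw [h5, zpow_neg, hnl, inv_one]
      rw [h4, one_mul]
    rw [harg, h1] at h2
    have hk : ζ ^ (k + (n : ℤ)) = ζ ^ k := by
      rw [zpow_add₀ hζ0, zpow_natCast, hζ, mul_one]
    rw [hk] at h2; exact h2.symm
  have hn0 : n ≠ 0 := by omega
  set ζ : ℂ := Complex.exp (2 * Real.pi * I / n) with hζdef
  have hprim : IsPrimitiveRoot ζ n := Complex.isPrimitiveRoot_exp n hn0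
  have hζn : ζ ^ n = 1 := hprim.pow_eq_one
  have hk1 : ζ ^ k = 1 := by
    have h := key ζ hζn 0
    rw [mul_zero] at h
    exact mul_right_cancel₀ ha0 (h.trans (one_mul (a.eval 0)).symm)
  have hdvd : (n : ℤ) ∣ k := (hprim.zpow_eq_one_iff_dvd k).mp hk1
  refine ⟨hdvd, ?_⟩
  set ξ : ℂ := ζ ^ m with hξdef
  have hξ : IsPrimitiveRoot ξ n := hprim.zpow_of_gcd_eq_one m hgcd
  have hinv : ∀ v : ℂ, a.eval (ξ * v) = a.eval v := by
    intro v
    have h := key ζ hζn v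
    rwa [hk1, one_mul] at h
  set b : Polynomial ℂ := ∑ e ∈ a.support, C (a.coeff e * ξ ^ e) * X ^ e with hbdef
  have hbev : ∀ v : ℂ, b.eval v = a.eval (ξ * v) := by
    intro v
    rw [hbdef, eval_finset_sum, eval_eq_sum, Polynomial.sum]
    exact Finset.sum_congr rfl fun e _ => by
      simp [mul_pow]; ring
  have hba : b = a := Polynomial.funext fun v => by rw [hbev, hinv]
  have hbcoeff : ∀ i : ℕ, b.coeff i = a.coeff i * ξ ^ i := by
    intro i
    rw [hbdef, finset_sum_coeff]
    simp only [coeff_C_mul, coeff_X_pow]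
    rw [Finset.sum_congr rfl fun e _ => by rw [mul_ite, mul_one, mul_zero]]
    rw [Finset.sum_ite_eq a.support i fun e => a.coeff e * ξ ^ e]
    by_cases hi : i ∈ a.support
    · simp [hi]
    · simp [hi, Polynomial.notMem_support_iff.mp hi]
  have hcoeff : ∀ i : ℕ, ¬ n ∣ i → a.coeff i = 0 := by
    intro i hni
    have h := hbcoeff i
    rw [hba] at h
    have hξi : ξ ^ i ≠ 1 := fun h1 => hni ((hξ.pow_eq_one_iff_dvd i).mp h1)
    by_contra hc
    exact hξi (mul_left_cancel₀ hc (h.symm.trans (mul_one _).symm))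
  refine ⟨∑ e ∈ a.support, C (a.coeff e) * X ^ (e / n), fun z => ?_⟩
  rw [eval_finset_sum, eval_eq_sum, Polynomial.sum]
  refine Finset.sum_congr rfl fun e he => ?_
  have hne : n ∣ e := by
    by_contra hc
    exact Polynomial.mem_support_iff.mp he (hcoeff e hc)
  simp only [eval_mul, eval_C, eval_pow, eval_X]
  rw [← pow_mul, Nat.mul_div_cancel' hne]
end

section
/- Let a ∈ ℂ[z] be a polynomial, c ∈ ℂ with c ≠ 0, N ∈ ℕ with N ≥ 1, and suppose the partial fraction decomposition a(z)/(c·z^N) = s(z) + A₁/z + A₂/z² + ⋯ + A_N/z^N holds for all z ≠ 0, where s ∈ ℂ[z] and A₁,…,A_N ∈ ℂ. Let U ⊆ ℂ ∖ {0} be open, let L : U → ℂ be holomorphic with L'(z) = 1/z (a branch of the logarithm), and let s̄ : ℂ → ℂ be holomorphic with s̄'(z) = s(z). Define Γ : U → ℂ by Γ(z) = exp( s̄(z) + A₁·L(z) + Σ_{i=2}^{N} (A_i/(1−i))·z^{1−i} ). Then Γ is nowhere vanishing and satisfies c·z^N·Γ'(z) = a(z)·Γ(z) for all z ∈ U. 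-/
open Complex

/-- Explicit integration of `a(z)/(c z^N)`: if
`a(z)/(c z^N) = s(z) + A₁/z + ⋯ + A_N/z^N` and
`Γ(z) = exp(s̄(z) + A₁ L(z) + Σ_{i=2}^N (A_i/(1-i)) z^{1-i})` with `s̄' = s` and
`L' = 1/z` on `U`, then `Γ` never vanishes and solves `c z^N Γ'(z) = a(z) Γ(z)` on `U`. -/
theorem explicit_solution_Gamma
    (a : Polynomial ℂ) (c : ℂ) (hc : c ≠ 0) (N : ℕ) (hN : 1 ≤ N)
    (s : Polynomial ℂ) (A : ℕ → ℂ)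
    (hdecomp : ∀ z : ℂ, z ≠ 0 →
      a.eval z / (c * z ^ N) = s.eval z + ∑ i ∈ Finset.Icc 1 N, A i / z ^ i)
    (U : Set ℂ) (hU : IsOpen U) (hU0 : U ⊆ {(0 : ℂ)}ᶜ)
    (L : ℂ → ℂ) (hL : ∀ z ∈ U, HasDerivAt L (1 / z) z)
    (sbar : ℂ → ℂ) (hsbar : ∀ z : ℂ, HasDerivAt sbar (s.eval z) z)
    (Γ : ℂ → ℂ)
    (hΓdef : ∀ z ∈ U,
      Γ z = Complex.exp (sbar z + A 1 * L z
        + ∑ i ∈ Finset.Icc 2 N, (A i / (1 - (i : ℂ))) * z ^ (1 - (i : ℤ)))) :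
    ∀ z ∈ U, Γ z ≠ 0 ∧ c * z ^ N * deriv Γ z = a.eval z * Γ z := by
  intro z hz
  have hz0 : z ≠ 0 := hU0 hz
  set g : ℂ → ℂ := fun w => sbar w + A 1 * L w
      + ∑ i ∈ Finset.Icc 2 N, (A i / (1 - (i : ℂ))) * w ^ (1 - (i : ℤ)) with hgdef
  have hgd : HasDerivAt g (s.eval z + A 1 * (1 / z)
      + ∑ i ∈ Finset.Icc 2 N, A i / z ^ i) z := by
    apply HasDerivAt.add
    · exact (hsbar z).add ((hL z hz).const_mul (A 1))
    · apply HasDerivAt.fun_sum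
      intro i hi
      have hi2 : 2 ≤ i := (Finset.mem_Icc.mp hi).1
      have h1i : (1 : ℂ) - (i : ℂ) ≠ 0 := by
        have : (i : ℂ) ≠ 1 := by exact_mod_cast (by omega : i ≠ 1)
        intro h
        apply this
        linear_combination -h
      have hd := (hasDerivAt_zpow (1 - (i : ℤ)) z (Or.inl hz0)).const_mul
        (A i / (1 - (i : ℂ)))
      convert hd using 1
      case e'_4 => rfl
      have hexp : 1 - (i : ℤ) - 1 = -(i : ℤ) := by ring
      rw [hexp, zpow_neg, zpow_natCast]
      push_cast
      field_simp
  -- derivative of Γ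
  have hΓev : Γ =ᶠ[nhds z] fun w => Complex.exp (g w) := by
    filter_upwards [hU.mem_nhds hz] with w hw using hΓdef w hw
  have hΓd : HasDerivAt Γ (Complex.exp (g z) * (s.eval z + A 1 * (1 / z)
      + ∑ i ∈ Finset.Icc 2 N, A i / z ^ i)) z :=
    (hgd.cexp.congr_of_eventuallyEq hΓev)
  have hΓz : Γ z = Complex.exp (g z) := hΓdef z hz
  refine ⟨by rw [hΓz]; exact Complex.exp_ne_zero _, ?_⟩
  rw [hΓd.deriv, hΓz]
  -- rewrite the sum
  have hsplit : s.eval z + A 1 * (1 / z) + ∑ i ∈ Finset.Icc 2 N, A i / z ^ i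
      = a.eval z / (c * z ^ N) := by
    rw [hdecomp z hz0]
    have h1 : Finset.Icc 1 N = insert 1 (Finset.Icc 2 N) := by
      ext x
      simp only [Finset.mem_Icc, Finset.mem_insert]
      omega
    rw [h1, Finset.sum_insert (by simp)]
    rw [pow_one]
    ring
  rw [hsplit]
  have hczN : c * z ^ N ≠ 0 := mul_ne_zero hc (pow_ne_zero _ hz0)
  field_simp
end

section
/- Let λ ∈ ℂ with Im λ ≠ 0, and let u₀, v₀ ∈ ℂ with u₀ ≠ 0 and v₀ ≠ 0. Then there exist a complex number w ≠ 0 and a sequence (tₙ) of complex numbers such that v₀·exp(tₙ) → 0 and u₀·exp(λ·tₙ) → w as n → ∞. (Thus the trajectory t ↦ (u₀·e^{λt}, v₀·e^{t}) of the linear vector field (u,v) ↦ (λu, v) accumulates at a point of the axis {v = 0} with nonzero first coordinate.) -/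
open Complex Filter

/-- For `λ` with nonzero imaginary part, the trajectory
`t ↦ (u₀ e^{λt}, v₀ e^t)` of `(u,v) ↦ (λu, v)` accumulates at a point of the axis
`{v = 0}` with nonzero first coordinate. -/
theorem irrational_rotation_accumulation
    (lam : ℂ) (hlam : lam.im ≠ 0) (u₀ v₀ : ℂ) (hu₀ : u₀ ≠ 0) (hv₀ : v₀ ≠ 0) :
    ∃ w : ℂ, w ≠ 0 ∧ ∃ t : ℕ → ℂ,
      Tendsto (fun n : ℕ => v₀ * Complex.exp (t n)) atTop (nhds 0) ∧
      Tendsto (fun n : ℕ => u₀ * Complex.exp (lam * t n)) atTop (nhds w) := by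
  have hlam0 : lam ≠ 0 := fun h => hlam (by simp [h])
  set s : ℤ := if 0 < lam.im then -1 else 1 with hs
  set c : ℂ := (s : ℂ) * (2 * Real.pi * I) / lam with hc
  -- key: Re c < 0
  have hre : c.re = (s : ℝ) * (2 * Real.pi) * lam.im / Complex.normSq lam := by
    rw [hc, div_re]
    simp [Complex.normSq]
  have hrec : c.re < 0 := by
    rw [hre]
    have hsq : 0 < Complex.normSq lam := normSq_pos.mpr hlam0
    apply div_neg_of_neg_of_pos _ hsq
    rcases lt_or_gt_of_ne hlam with h | h
    · have : s = 1 := by simp [hs, not_lt.mpr h.le, h.ne]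
      rw [this]
      push_cast
      nlinarith [Real.pi_pos]
    · have : s = -1 := by simp [hs, h]
      rw [this]
      push_cast
      nlinarith [Real.pi_pos]
  refine ⟨u₀, hu₀, fun n => n * c, ?_, ?_⟩
  · rw [tendsto_zero_iff_norm_tendsto_zero]
    have heq : (fun n : ℕ => ‖v₀ * Complex.exp (n * c)‖)
        = fun n : ℕ => ‖v₀‖ * Real.exp ((n : ℝ) * c.re) := by
      funext n
      simp [Complex.norm_exp]
    rw [heq]
    have h1 : Tendsto (fun n : ℕ => (n : ℝ) * c.re) atTop atBot := by
      apply Filter.Tendsto.atTop_mul_const_of_neg hrec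
      exact tendsto_natCast_atTop_atTop
    have := (Real.tendsto_exp_atBot.comp h1).const_mul ‖v₀‖
    simpa using this
  · have heq : (fun n : ℕ => u₀ * Complex.exp (lam * (n * c))) = fun _ : ℕ => u₀ := by
      funext n
      have : lam * (n * c) = ((n * s : ℤ) : ℂ) * (2 * Real.pi * I) := by
        rw [hc]
        field_simp
        push_cast
        ring
      rw [this, Complex.exp_int_mul_two_pi_mul_I, mul_one]
    rw [heq]
    exact tendsto_const_nhds
end
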